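/- (Main theorem, first direction.) Let σ:H×H→A be a k-bilinear H^R-balanced map (σ(hr,k)=σ(h,rk) for all r∈H^R), and set ς(h⊗k):=σ(h,k). If ρ and σ satisfy conditions (1)–(10), then ρ and ς satisfy conditions (2), (4), (11) and (17)–(22); explicitly: (11) h·(l·1_A)=hl·1_A for all h,l∈H; (17) (h⁽¹⁾·ς(k⁽¹⁾⊗m⁽¹⁾))ς(h⁽²⁾⊗k⁽²⁾m⁽²⁾)=ς(h⁽¹⁾⊗k⁽¹⁾)ς(h⁽²⁾k⁽²⁾⊗m); (18) (h⁽¹⁾·(k⁽¹⁾·a))ς(h⁽²⁾⊗k⁽²⁾)=ς(h⁽¹⁾⊗k⁽¹⁾)(h⁽²⁾k⁽²⁾·a); (19) ς(h⊗k)=ς(h⁽¹⁾⊗k⁽¹⁾)(h⁽²⁾k⁽²⁾·1_A); (20) h·1_A=(h⁽¹⁾·(1⁽¹⁾·1_A))ς(h⁽²⁾⊗1⁽²⁾); (21) h·1_A=(1⁽¹⁾·1_A)ς(1⁽²⁾⊗h); (22) a(1⁽¹⁾·1_A)⊗1⁽²⁾=(1⁽¹⁾·a)⊗1⁽²⁾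 in A⊗H. -/

import Mathlib

open scoped TensorProduct

/-- The data of a weak bialgebra structure (together with an antipode and its
inverse) on a `k`-algebra `H`: a comultiplication `Δ`, a counit `ε`, an
antipode `S` and its inverse `Sinv`. -/
structure WeakHopfData (k H : Type*) [Field k] [Ring H] [Algebra k H] where
  Δ : H →ₗ[k] H ⊗[k] H
  ε : H →ₗ[k] k
  S : H →ₗ[k] H
  Sinv : H →ₗ[k] H

section

variable {k H A : Type*} [Field k] [Ring H] [Algebra k H] [Ring A] [Algebra k A]

/-- `Π^L(h) = ε(1⁽¹⁾h)1⁽²⁾`. -/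
noncomputable def piL (W : WeakHopfData k H) (h : H) : H :=
  (TensorProduct.lid k H) ((LinearMap.rTensor H (W.ε ∘ₗ LinearMap.mulRight k h)) (W.Δ 1))

/-- `Π^R(h) = 1⁽¹⁾ε(h1⁽²⁾)`. -/
noncomputable def piR (W : WeakHopfData k H) (h : H) : H :=
  (TensorProduct.rid k H) ((LinearMap.lTensor H (W.ε ∘ₗ LinearMap.mulLeft k h)) (W.Δ 1))

/-- `H^L = im(Π^L)`. -/
def HL (W : WeakHopfData k H) : Set H := Set.range (piL W)

/-- `H^R = im(Π^R)`. -/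
def HR (W : WeakHopfData k H) : Set H := Set.range (piR W)

/-- The axioms of a weak Hopf algebra with bijective antipode, where Sweedler
sums are expressed via arbitrary finite representations of the comultiplication. -/
structure IsWeakHopf (W : WeakHopfData k H) : Prop where
  coassoc : ∀ h : H,
    (TensorProduct.assoc k H H H) ((LinearMap.rTensor H W.Δ) (W.Δ h)) =
      (LinearMap.lTensor H W.Δ) (W.Δ h)
  counit_left : ∀ h : H, (TensorProduct.lid k H) ((LinearMap.rTensor H W.ε) (W.Δ h)) = h
  counit_right : ∀ h : H, (TensorProduct.rid k H) ((LinearMap.lTensor H W.ε) (W.Δ h)) = h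
  comul_mul : ∀ h l : H, W.Δ (h * l) = W.Δ h * W.Δ l
  weak_comul_one₁ : (LinearMap.lTensor H W.Δ) (W.Δ 1) =
    (TensorProduct.assoc k H H H) (W.Δ 1 ⊗ₜ[k] (1 : H)) * ((1 : H) ⊗ₜ[k] W.Δ 1)
  weak_comul_one₂ : (LinearMap.lTensor H W.Δ) (W.Δ 1) =
    ((1 : H) ⊗ₜ[k] W.Δ 1) * (TensorProduct.assoc k H H H) (W.Δ 1 ⊗ₜ[k] (1 : H))
  weak_counit : ∀ h l m : H, ∀ (n : ℕ) (x y : Fin n → H),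
    W.Δ l = ∑ i, x i ⊗ₜ[k] y i →
      W.ε (h * l * m) = ∑ i, W.ε (h * x i) * W.ε (y i * m) ∧
      W.ε (h * l * m) = ∑ i, W.ε (h * y i) * W.ε (x i * m)
  antipode_left : ∀ h : H, ∀ (n : ℕ) (x y : Fin n → H),
    W.Δ h = ∑ i, x i ⊗ₜ[k] y i → ∑ i, x i * W.S (y i) = piL W h
  antipode_right : ∀ h : H, ∀ (n : ℕ) (x y : Fin n → H),
    W.Δ h = ∑ i, x i ⊗ₜ[k] y i → ∑ i, W.S (x i) * y i = piR W h
  antipode_mid : ∀ h : H, ∀ (n : ℕ) (x y : Fin n → H),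
    W.Δ h = ∑ i, x i ⊗ₜ[k] y i →
      ∀ (m : Fin n → ℕ) (u v : (i : Fin n) → Fin (m i) → H),
        (∀ i, W.Δ (y i) = ∑ j, u i j ⊗ₜ[k] v i j) →
          ∑ i, ∑ j, W.S (x i) * u i j * W.S (v i j) = W.S h
  S_Sinv : ∀ h : H, W.S (W.Sinv h) = h
  Sinv_S : ∀ h : H, W.Sinv (W.S h) = h

/-- Condition (1): `h·1_A = Π^L(h)·1_A`. -/
def cond1 (W : WeakHopfData k H) (ρ : H →ₗ[k] A →ₗ[k] A) : Prop :=
  ∀ h : H, ρ h 1 = ρ (piL W h) 1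

/-- Condition (2): `h·(aa') = (h⁽¹⁾·a)(h⁽²⁾·a')`. -/
def cond2 (W : WeakHopfData k H) (ρ : H →ₗ[k] A →ₗ[k] A) : Prop :=
  ∀ (h : H) (a a' : A) (n : ℕ) (x y : Fin n → H),
    W.Δ h = ∑ i, x i ⊗ₜ[k] y i → ρ h (a * a') = ∑ i, ρ (x i) a * ρ (y i) a'

/-- Condition (3): `S⁻¹(l)h·a = (h·a)(l·1_A)` and `lh·a = (l·1_A)(h·a)` for `l ∈ H^L`. -/
def cond3 (W : WeakHopfData k H) (ρ : H →ₗ[k] A →ₗ[k] A) : Prop :=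
  ∀ (h : H) (a : A), ∀ l ∈ HL W,
    ρ (W.Sinv l * h) a = ρ h a * ρ l 1 ∧ ρ (l * h) a = ρ l 1 * ρ h a

/-- Condition (4): `1·a = a`. -/
def cond4 (ρ : H →ₗ[k] A →ₗ[k] A) : Prop := ∀ a : A, ρ 1 a = a

/-- Condition (5). -/
def cond5 (W : WeakHopfData k H) (ρ : H →ₗ[k] A →ₗ[k] A) (σ : H → H → A) : Prop :=
  ∀ (h g : H), ∀ l ∈ HL W,
    σ (l * h) g = ρ l 1 * σ h g ∧ σ (W.Sinv l * h) g = σ h g * ρ l 1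

/-- Condition (6): `(h⁽¹⁾·(l·1_A))σ(h⁽²⁾,k) = σ(h,lk)` for `l ∈ H^L`. -/
def cond6 (W : WeakHopfData k H) (ρ : H →ₗ[k] A →ₗ[k] A) (σ : H → H → A) : Prop :=
  ∀ (h g : H), ∀ l ∈ HL W, ∀ (n : ℕ) (x y : Fin n → H),
    W.Δ h = ∑ i, x i ⊗ₜ[k] y i →
      ∑ i, ρ (x i) (ρ l 1) * σ (y i) g = σ h (l * g)

/-- Condition (7): `σ(1,h) = σ(h,1) = h·1_A`. -/
def cond7 (ρ : H →ₗ[k] A →ₗ[k] A) (σ : H → H → A) : Prop :=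
  ∀ h : H, σ 1 h = ρ h 1 ∧ σ h 1 = ρ h 1

/-- Condition (8), the cocycle condition. -/
def cond8 (W : WeakHopfData k H) (ρ : H →ₗ[k] A →ₗ[k] A) (σ : H → H → A) : Prop :=
  ∀ (h g m : H) (n₁ : ℕ) (x₁ y₁ : Fin n₁ → H) (n₂ : ℕ) (x₂ y₂ : Fin n₂ → H)
    (n₃ : ℕ) (x₃ y₃ : Fin n₃ → H),
    W.Δ h = ∑ i, x₁ i ⊗ₜ[k] y₁ i → W.Δ g = ∑ i, x₂ i ⊗ₜ[k] y₂ i →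
    W.Δ m = ∑ i, x₃ i ⊗ₜ[k] y₃ i →
      ∑ i, ∑ j, ∑ p, ρ (x₁ i) (σ (x₂ j) (x₃ p)) * σ (y₁ i) (y₂ j * y₃ p) =
        ∑ i, ∑ j, σ (x₁ i) (x₂ j) * σ (y₁ i * y₂ j) m

/-- Condition (9), the twisted module condition. -/
def cond9 (W : WeakHopfData k H) (ρ : H →ₗ[k] A →ₗ[k] A) (σ : H → H → A) : Prop :=
  ∀ (h g : H) (a : A) (n : ℕ) (x y : Fin n → H) (m : ℕ) (u v : Fin m → H),
    W.Δ h = ∑ i, x i ⊗ₜ[k] y i → W.Δ g = ∑ j, u j ⊗ₜ[k] v j →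
      ∑ i, ∑ j, ρ (x i) (ρ (u j) a) * σ (y i) (v j) =
        ∑ i, ∑ j, σ (x i) (u j) * ρ (y i * v j) a

/-- Condition (10): `h·(l·1_A) = hl·1_A` for `l ∈ H^L`. -/
def cond10 (W : WeakHopfData k H) (ρ : H →ₗ[k] A →ₗ[k] A) : Prop :=
  ∀ h : H, ∀ l ∈ HL W, ρ h (ρ l 1) = ρ (h * l) 1

/-- Condition (11): `h·(l·1_A) = hl·1_A` for all `h, l ∈ H`. -/
def cond11 (ρ : H →ₗ[k] A →ₗ[k] A) : Prop :=
  ∀ h l : H, ρ h (ρ l 1) = ρ (h * l) 1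

/-- Condition (12): `σ(h,l) = σ(hl,1)` for `l ∈ H^L`. -/
def cond12 (W : WeakHopfData k H) (σ : H → H → A) : Prop :=
  ∀ h : H, ∀ l ∈ HL W, σ h l = σ (h * l) 1

/-- Condition (13). -/
def cond13 (W : WeakHopfData k H) (ρ : H →ₗ[k] A →ₗ[k] A) (σbar : H → H → A) : Prop :=
  ∀ (h g : H) (n : ℕ) (x y : Fin n → H) (m : ℕ) (u v : Fin m → H),
    W.Δ h = ∑ i, x i ⊗ₜ[k] y i → W.Δ g = ∑ j, u j ⊗ₜ[k] v j →
      σbar h g = ∑ i, ∑ j, ρ (x i * u j) 1 * σbar (y i) (v j)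

/-- Condition (14). -/
def cond14 (W : WeakHopfData k H) (ρ : H →ₗ[k] A →ₗ[k] A) (σbar : H → H → A) : Prop :=
  ∀ (h g : H), ∀ l ∈ HL W,
    σbar (l * h) g = ρ l 1 * σbar h g ∧ σbar (W.Sinv l * h) g = σbar h g * ρ l 1

/-- Condition (15). -/
def cond15 (W : WeakHopfData k H) (ρ : H →ₗ[k] A →ₗ[k] A) (σbar : H → H → A) : Prop :=
  ∀ (h g : H), ∀ l ∈ HL W, ∀ (n : ℕ) (x y : Fin n → H),
    W.Δ h = ∑ i, x i ⊗ₜ[k] y i →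
      ∑ i, σbar (x i) g * ρ (y i) (ρ l 1) = σbar h (W.Sinv l * g)

/-- Condition (16). -/
def cond16 (W : WeakHopfData k H) (ρ : H →ₗ[k] A →ₗ[k] A) (σ σbar : H → H → A) : Prop :=
  ∀ (h g : H) (n : ℕ) (x y : Fin n → H) (m : ℕ) (u v : Fin m → H),
    W.Δ h = ∑ i, x i ⊗ₜ[k] y i → W.Δ g = ∑ j, u j ⊗ₜ[k] v j →
      (∑ i, ∑ j, σ (x i) (u j) * σbar (y i) (v j) = ρ h (ρ g 1)) ∧
      (∑ i, ∑ j, σbar (x i) (u j) * σ (y i) (v j) = ρ (h * g) 1)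

/-- Condition (17), the cocycle condition for `ς : H ⊗ H → A`. -/
def cond17 (W : WeakHopfData k H) (ρ : H →ₗ[k] A →ₗ[k] A) (ς : H ⊗[k] H → A) : Prop :=
  ∀ (h g m : H) (n₁ : ℕ) (x₁ y₁ : Fin n₁ → H) (n₂ : ℕ) (x₂ y₂ : Fin n₂ → H)
    (n₃ : ℕ) (x₃ y₃ : Fin n₃ → H),
    W.Δ h = ∑ i, x₁ i ⊗ₜ[k] y₁ i → W.Δ g = ∑ i, x₂ i ⊗ₜ[k] y₂ i →
    W.Δ m = ∑ i, x₃ i ⊗ₜ[k] y₃ i →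
      ∑ i, ∑ j, ∑ p, ρ (x₁ i) (ς (x₂ j ⊗ₜ[k] x₃ p)) * ς (y₁ i ⊗ₜ[k] (y₂ j * y₃ p)) =
        ∑ i, ∑ j, ς (x₁ i ⊗ₜ[k] x₂ j) * ς ((y₁ i * y₂ j) ⊗ₜ[k] m)

/-- Condition (18), the twisted module condition for `ς : H ⊗ H → A`. -/
def cond18 (W : WeakHopfData k H) (ρ : H →ₗ[k] A →ₗ[k] A) (ς : H ⊗[k] H → A) : Prop :=
  ∀ (h g : H) (a : A) (n : ℕ) (x y : Fin n → H) (m : ℕ) (u v : Fin m → H),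
    W.Δ h = ∑ i, x i ⊗ₜ[k] y i → W.Δ g = ∑ j, u j ⊗ₜ[k] v j →
      ∑ i, ∑ j, ρ (x i) (ρ (u j) a) * ς (y i ⊗ₜ[k] v j) =
        ∑ i, ∑ j, ς (x i ⊗ₜ[k] u j) * ρ (y i * v j) a

/-- Condition (19). -/
def cond19 (W : WeakHopfData k H) (ρ : H →ₗ[k] A →ₗ[k] A) (ς : H ⊗[k] H → A) : Prop :=
  ∀ (h g : H) (n : ℕ) (x y : Fin n → H) (m : ℕ) (u v : Fin m → H),
    W.Δ h = ∑ i, x i ⊗ₜ[k] y i → W.Δ g = ∑ j, u j ⊗ₜ[k] v j →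
      ς (h ⊗ₜ[k] g) = ∑ i, ∑ j, ς (x i ⊗ₜ[k] u j) * ρ (y i * v j) 1

/-- Condition (20). -/
def cond20 (W : WeakHopfData k H) (ρ : H →ₗ[k] A →ₗ[k] A) (ς : H ⊗[k] H → A) : Prop :=
  ∀ (h : H) (n : ℕ) (x y : Fin n → H) (m : ℕ) (u v : Fin m → H),
    W.Δ h = ∑ i, x i ⊗ₜ[k] y i → W.Δ 1 = ∑ j, u j ⊗ₜ[k] v j →
      ρ h 1 = ∑ i, ∑ j, ρ (x i) (ρ (u j) 1) * ς (y i ⊗ₜ[k] v j)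

/-- Condition (21). -/
def cond21 (W : WeakHopfData k H) (ρ : H →ₗ[k] A →ₗ[k] A) (ς : H ⊗[k] H → A) : Prop :=
  ∀ (h : H) (m : ℕ) (u v : Fin m → H),
    W.Δ 1 = ∑ j, u j ⊗ₜ[k] v j →
      ρ h 1 = ∑ j, ρ (u j) 1 * ς (v j ⊗ₜ[k] h)

/-- Condition (22): `a(1⁽¹⁾·1_A) ⊗ 1⁽²⁾ = (1⁽¹⁾·a) ⊗ 1⁽²⁾` in `A ⊗ H`. -/
def cond22 (W : WeakHopfData k H) (ρ : H →ₗ[k] A →ₗ[k] A) : Prop :=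
  ∀ (a : A) (m : ℕ) (u v : Fin m → H),
    W.Δ 1 = ∑ j, u j ⊗ₜ[k] v j →
      (∑ j, (a * ρ (u j) 1) ⊗ₜ[k] v j) = ∑ j, (ρ (u j) a) ⊗ₜ[k] v j

/-- Condition (23). -/
def cond23 (W : WeakHopfData k H) (ρ : H →ₗ[k] A →ₗ[k] A) (ςbar : H ⊗[k] H → A) : Prop :=
  ∀ (h g : H) (n : ℕ) (x y : Fin n → H) (m : ℕ) (u v : Fin m → H),
    W.Δ h = ∑ i, x i ⊗ₜ[k] y i → W.Δ g = ∑ j, u j ⊗ₜ[k] v j →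
      ςbar (h ⊗ₜ[k] g) = ∑ i, ∑ j, ρ (x i * u j) 1 * ςbar (y i ⊗ₜ[k] v j)

/-- Condition (24). -/
def cond24 (W : WeakHopfData k H) (ρ : H →ₗ[k] A →ₗ[k] A) (ς ςbar : H ⊗[k] H → A) : Prop :=
  ∀ (h g : H) (n : ℕ) (x y : Fin n → H) (m : ℕ) (u v : Fin m → H),
    W.Δ h = ∑ i, x i ⊗ₜ[k] y i → W.Δ g = ∑ j, u j ⊗ₜ[k] v j →
      (∑ i, ∑ j, ς (x i ⊗ₜ[k] u j) * ςbar (y i ⊗ₜ[k] v j) = ρ (h * g) 1) ∧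
      (∑ i, ∑ j, ςbar (x i ⊗ₜ[k] u j) * ς (y i ⊗ₜ[k] v j) = ρ (h * g) 1)

/-- `σ` is `H^R`-balanced: `σ(hr,k) = σ(h,rk)` for `r ∈ H^R`. -/
def HRBalanced (W : WeakHopfData k H) (σ : H → H → A) : Prop :=
  ∀ (h g : H), ∀ r ∈ HR W, σ (h * r) g = σ h (r * g)

/-- `σbar` is `H^L`-balanced: `σbar(hl,k) = σbar(h,lk)` for `l ∈ H^L`. -/
def HLBalanced (W : WeakHopfData k H) (σbar : H → H → A) : Prop :=
  ∀ (h g : H), ∀ l ∈ HL W, σbar (h * l) g = σbar h (l * g)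

/-- The idempotent `∇ρ : A ⊗ H → A ⊗ H`, `a ⊗ h ↦ a(h⁽¹⁾·1_A) ⊗ h⁽²⁾`. -/
noncomputable def nabla (W : WeakHopfData k H) (ρ : H →ₗ[k] A →ₗ[k] A) :
    A ⊗[k] H →ₗ[k] A ⊗[k] H :=
  (LinearMap.rTensor H (LinearMap.mul' k A ∘ₗ LinearMap.lTensor A (ρ.flip 1))) ∘ₗ
    (TensorProduct.assoc k A H H).symm.toLinearMap ∘ₗ LinearMap.lTensor A W.Δ

/-- The subspace `N` of `A ⊗ H` spanned by the elements
`a(l·1_A) ⊗ h - a ⊗ lh` with `l ∈ H^L`, so that `(A ⊗ H)/N = A ⊗_{H^L} H`. -/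
def relN (W : WeakHopfData k H) (ρ : H →ₗ[k] A →ₗ[k] A) : Submodule k (A ⊗[k] H) :=
  Submodule.span k
    {z | ∃ (a : A) (l h : H), l ∈ HL W ∧ z = (a * ρ l 1) ⊗ₜ[k] h - a ⊗ₜ[k] (l * h)}

/-- The map `σ̃(h,k) := (h⁽¹⁾k⁽¹⁾·1_A)σ̄(h⁽²⁾,k⁽²⁾)`. -/
noncomputable def sigmaTilde (W : WeakHopfData k H) (ρ : H →ₗ[k] A →ₗ[k] A)
    (σbar : H →ₗ[k] H →ₗ[k] A) : H → H → A := fun h g =>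
  LinearMap.mul' k A
    ((TensorProduct.map ((ρ.flip 1) ∘ₗ LinearMap.mul' k H) (TensorProduct.lift σbar))
      ((TensorProduct.tensorTensorTensorComm k H H H H) (W.Δ h ⊗ₜ[k] W.Δ g)))

end

/-!
Everything rests on three identities of a weak Hopf algebra: `g = Π^L(g⁽¹⁾)g⁽²⁾`,
`Δ(1) = 1⁽¹⁾ ⊗ Π^L(1⁽²⁾)` and `Δ²(1) = 1⁽¹⁾ ⊗ 1⁽²⁾1'⁽¹⁾ ⊗ 1'⁽²⁾`. By (1) and the first one,
condition (6) collapses `(h⁽¹⁾·(g⁽¹⁾·1_A))σ(h⁽²⁾,g⁽²⁾)` to `σ(h,g)`, which gives (19) with (9)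
and (20) with (7); in the same way (5) and (7) give (21). Condition (11) is (10) together with
`Π^L(hΠ^L(l)) = Π^L(hl)`. For (22) write `a = (1⁽¹⁾·a)(1⁽²⁾·1_A)`; the second identity moves
`1⁽²⁾` into `H^L`, where (3) gives `(l·1_A)(g·1_A) = lg·1_A`, and the third identity together
with (2) reassembles the result into `(1⁽¹⁾·a) ⊗ 1⁽²⁾`.
-/

section WeakHopf

variable {k H : Type*} [Field k] [Ring H] [Algebra k H] {W : WeakHopfData k H}

theorem piL_eq_sum {m : ℕ} {u v : Fin m → H} (hone : W.Δ 1 = ∑ j, u j ⊗ₜ[k] v j) (h : H) :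
    piL W h = ∑ j, W.ε (u j * h) • v j := by
  simp [piL, hone, map_sum]

namespace IsWeakHopf

theorem counit_mul_piL (hW : IsWeakHopf W) (h l : H) :
    W.ε (h * piL W l) = W.ε (h * l) := by
  obtain ⟨m, u, v, hone⟩ := TensorProduct.exists_sum_tmul_eq (W.Δ 1)
  have hsplit := (hW.weak_counit h 1 l m u v hone).2
  rw [mul_one] at hsplit
  rw [piL_eq_sum hone, hsplit]
  simp [Finset.mul_sum, mul_comm]

theorem piL_mul_piL (hW : IsWeakHopf W) (h l : H) :
    piL W (h * piL W l) = piL W (h * l) := by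
  obtain ⟨m, u, v, hone⟩ := TensorProduct.exists_sum_tmul_eq (W.Δ 1)
  rw [piL_eq_sum hone (h * piL W l), piL_eq_sum hone (h * l)]
  simp only [← mul_assoc, hW.counit_mul_piL]

theorem sum_piL_mul (hW : IsWeakHopf W) {m : ℕ} {u v : Fin m → H} {g : H}
    (hg : W.Δ g = ∑ j, u j ⊗ₜ[k] v j) :
    ∑ j, piL W (u j) * v j = g := by
  obtain ⟨n, p, q, hone⟩ := TensorProduct.exists_sum_tmul_eq (W.Δ 1)
  have hΔ : W.Δ g = ∑ s, ∑ j, (p s * u j) ⊗ₜ[k] (q s * v j) := by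
    rw [← one_mul g, hW.comul_mul, hone, hg, Finset.sum_mul_sum]
    simp [Algebra.TensorProduct.tmul_mul_tmul]
  have hcounit := hW.counit_left g
  rw [hΔ] at hcounit
  simp only [map_sum, LinearMap.rTensor_tmul, TensorProduct.lid_tmul] at hcounit
  rw [← hcounit, Finset.sum_comm]
  simp only [piL_eq_sum hone, Finset.sum_mul, smul_mul_assoc]

theorem comul_one_eq_sum_tmul_piL (hW : IsWeakHopf W) {m : ℕ} {u v : Fin m → H}
    (hone : W.Δ 1 = ∑ j, u j ⊗ₜ[k] v j) :
    W.Δ 1 = ∑ j, u j ⊗ₜ[k] piL W (v j) := by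
  set f : H ⊗[k] H →ₗ[k] H := (TensorProduct.lid k H).toLinearMap ∘ₗ LinearMap.rTensor H W.ε
  have hf : f ∘ₗ W.Δ = LinearMap.id := LinearMap.ext hW.counit_left
  have key := congrArg (LinearMap.lTensor H f) hW.weak_comul_one₂
  rw [← LinearMap.comp_apply, ← LinearMap.lTensor_comp, hf, LinearMap.lTensor_id,
    LinearMap.id_apply] at key
  rw [key, hone]
  simp only [f, piL_eq_sum hone, map_sum, TensorProduct.tmul_sum, TensorProduct.sum_tmul,
    TensorProduct.assoc_tmul, Finset.sum_mul_sum, Algebra.TensorProduct.tmul_mul_tmul, one_mul,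
    mul_one, LinearMap.lTensor_tmul, LinearMap.coe_comp, LinearEquiv.coe_coe, Function.comp_apply,
    LinearMap.rTensor_tmul, TensorProduct.lid_tmul, TensorProduct.tmul_smul]
  exact Finset.sum_comm

theorem rTensor_comul_comul_one (hW : IsWeakHopf W) {m : ℕ} {u v : Fin m → H}
    (hone : W.Δ 1 = ∑ j, u j ⊗ₜ[k] v j) :
    LinearMap.rTensor H W.Δ (W.Δ 1) = ∑ s, ∑ j, (u s ⊗ₜ[k] (v s * u j)) ⊗ₜ[k] v j := by
  apply (TensorProduct.assoc k H H H).injective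
  rw [hW.coassoc, hW.weak_comul_one₁, hone]
  simp [TensorProduct.sum_tmul, TensorProduct.tmul_sum, Finset.sum_mul_sum,
    Algebra.TensorProduct.tmul_mul_tmul]

end IsWeakHopf

end WeakHopf

section TwistedAction

variable {k H A : Type*} [Field k] [Ring H] [Algebra k H] [Ring A] [Algebra k A]
  {W : WeakHopfData k H} {ρ : H →ₗ[k] A →ₗ[k] A}

theorem cond11_of_cond1_of_cond10 (hW : IsWeakHopf W) (h1 : cond1 W ρ) (h10 : cond10 W ρ) :
    cond11 ρ := by
  intro h l
  rw [h1 l, h10 h _ ⟨l, rfl⟩, h1, hW.piL_mul_piL, ← h1]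

theorem mul'_comp_map_act_comp_comul (h2 : cond2 W ρ) (a : A) :
    LinearMap.mul' k A ∘ₗ TensorProduct.map (ρ.flip a) (ρ.flip 1) ∘ₗ W.Δ = ρ.flip a := by
  ext h
  obtain ⟨n, x, y, hh⟩ := TensorProduct.exists_sum_tmul_eq (W.Δ h)
  simpa [hh] using (h2 h a 1 n x y hh).symm

theorem sum_act_tmul_eq (hW : IsWeakHopf W) (h2 : cond2 W ρ) {m : ℕ} {u v : Fin m → H}
    (hone : W.Δ 1 = ∑ j, u j ⊗ₜ[k] v j) (a : A) :
    ∑ j, ρ (u j) a ⊗ₜ[k] v j = ∑ s, ∑ j, (ρ (u s) a * ρ (v s * u j) 1) ⊗ₜ[k] v j := by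
  have hsum : ∑ j, ρ (u j) a ⊗ₜ[k] v j = LinearMap.rTensor H (ρ.flip a) (W.Δ 1) := by
    simp [hone]
  rw [hsum, ← mul'_comp_map_act_comp_comul h2 a]
  simp only [LinearMap.rTensor_comp, LinearMap.comp_apply]
  rw [hW.rTensor_comul_comul_one hone]
  simp

theorem sum_act_mul_act_one_mul (hW : IsWeakHopf W) (h3 : cond3 W ρ) {m : ℕ} {u v : Fin m → H}
    (hone : W.Δ 1 = ∑ j, u j ⊗ₜ[k] v j) (a : A) (g : H) :
    ∑ s, ρ (u s) a * ρ (v s) 1 * ρ g 1 = ∑ s, ρ (u s) a * ρ (v s * g) 1 := by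
  have hΔ := hW.comul_one_eq_sum_tmul_piL hone
  rw [hone] at hΔ
  have e₁ := congrArg (TensorProduct.lift <|
    (LinearMap.mul k A).compl₁₂ (ρ.flip a) (LinearMap.mulRight k (ρ g 1) ∘ₗ ρ.flip 1)) hΔ
  have e₂ := congrArg (TensorProduct.lift <|
    (LinearMap.mul k A).compl₁₂ (ρ.flip a) (ρ.flip 1 ∘ₗ LinearMap.mulRight k g)) hΔ
  simp only [map_sum, TensorProduct.lift.tmul, LinearMap.compl₁₂_apply, LinearMap.flip_apply,
    LinearMap.coe_comp, Function.comp_apply, LinearMap.mulRight_apply,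
    LinearMap.mul_apply_apply] at e₁ e₂
  simp only [mul_assoc]
  rw [e₁, e₂]
  refine Finset.sum_congr rfl fun s _ => ?_
  rw [(h3 g 1 _ ⟨v s, rfl⟩).2]

theorem cond22_of_cond2_of_cond3_of_cond4 (hW : IsWeakHopf W) (h2 : cond2 W ρ)
    (h3 : cond3 W ρ) (h4 : cond4 ρ) : cond22 W ρ := by
  intro a m u v hone
  have ha : a = ∑ s, ρ (u s) a * ρ (v s) 1 := by
    simpa [h4 a] using h2 1 a 1 m u v hone
  calc ∑ j, (a * ρ (u j) 1) ⊗ₜ[k] v j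
      = ∑ j, (∑ s, ρ (u s) a * ρ (v s) 1 * ρ (u j) 1) ⊗ₜ[k] v j := by
        conv_lhs => rw [ha]
        simp only [Finset.sum_mul]
    _ = ∑ j, (∑ s, ρ (u s) a * ρ (v s * u j) 1) ⊗ₜ[k] v j := by
        simp only [sum_act_mul_act_one_mul hW h3 hone]
    _ = ∑ j, ρ (u j) a ⊗ₜ[k] v j := by
        rw [sum_act_tmul_eq hW h2 hone, Finset.sum_comm]
        simp only [TensorProduct.sum_tmul]

variable {σ : H →ₗ[k] H →ₗ[k] A}

theorem cond17_lift_iff_cond8 :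
    cond17 W ρ (TensorProduct.lift σ) ↔ cond8 W ρ (fun h g => σ h g) := by
  simp only [cond17, cond8, TensorProduct.lift.tmul]

theorem cond18_lift_iff_cond9 :
    cond18 W ρ (TensorProduct.lift σ) ↔ cond9 W ρ (fun h g => σ h g) := by
  simp only [cond18, cond9, TensorProduct.lift.tmul]

theorem sum_act_act_one_mul_eq (hW : IsWeakHopf W) (h1 : cond1 W ρ)
    (h6 : cond6 W ρ (fun h g => σ h g)) {h g : H} {n : ℕ} {x y : Fin n → H} {m : ℕ}
    {u v : Fin m → H} (hh : W.Δ h = ∑ i, x i ⊗ₜ[k] y i) (hg : W.Δ g = ∑ j, u j ⊗ₜ[k] v j) :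
    ∑ i, ∑ j, ρ (x i) (ρ (u j) 1) * σ (y i) (v j) = σ h g := by
  rw [Finset.sum_comm]
  calc ∑ j, ∑ i, ρ (x i) (ρ (u j) 1) * σ (y i) (v j)
      = ∑ j, σ h (piL W (u j) * v j) := by
        refine Finset.sum_congr rfl fun j _ => ?_
        rw [h1 (u j)]
        exact h6 h (v j) _ ⟨u j, rfl⟩ n x y hh
    _ = σ h g := by rw [← map_sum, hW.sum_piL_mul hg]

theorem cond19_lift_of_cond1_of_cond6_of_cond9 (hW : IsWeakHopf W) (h1 : cond1 W ρ)
    (h6 : cond6 W ρ (fun h g => σ h g)) (h9 : cond9 W ρ (fun h g => σ h g)) :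
    cond19 W ρ (TensorProduct.lift σ) := by
  intro h g n x y m u v hh hg
  simp only [TensorProduct.lift.tmul]
  rw [← h9 h g 1 n x y m u v hh hg, sum_act_act_one_mul_eq hW h1 h6 hh hg]

theorem cond20_lift_of_cond1_of_cond6_of_cond7 (hW : IsWeakHopf W) (h1 : cond1 W ρ)
    (h6 : cond6 W ρ (fun h g => σ h g)) (h7 : cond7 ρ (fun h g => σ h g)) :
    cond20 W ρ (TensorProduct.lift σ) := by
  intro h n x y m u v hh hone
  simp only [TensorProduct.lift.tmul]
  rw [sum_act_act_one_mul_eq hW h1 h6 hh hone]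
  exact (h7 h).2.symm

theorem cond21_lift_of_cond1_of_cond5_of_cond7 (hW : IsWeakHopf W) (h1 : cond1 W ρ)
    (h5 : cond5 W ρ (fun h g => σ h g)) (h7 : cond7 ρ (fun h g => σ h g)) :
    cond21 W ρ (TensorProduct.lift σ) := by
  intro h m u v hone
  simp only [TensorProduct.lift.tmul]
  calc ρ h 1 = σ 1 h := (h7 h).1.symm
    _ = σ (∑ j, piL W (u j) * v j) h := by rw [hW.sum_piL_mul hone]
    _ = ∑ j, ρ (u j) 1 * σ (v j) h := by
        rw [map_sum, LinearMap.sum_apply]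
        refine Finset.sum_congr rfl fun j _ => ?_
        rw [h1 (u j)]
        exact (h5 (v j) h _ ⟨u j, rfl⟩).1

end TwistedAction

theorem statement6_general {k H A : Type*} [Field k] [Ring H] [Algebra k H] [Ring A] [Algebra k A]
    (W : WeakHopfData k H) (hW : IsWeakHopf W) (ρ : H →ₗ[k] A →ₗ[k] A)
    (σb : H →ₗ[k] H →ₗ[k] A)
    (h1 : cond1 W ρ) (h2 : cond2 W ρ) (h3 : cond3 W ρ) (h4 : cond4 ρ)
    (h5 : cond5 W ρ (fun h g => σb h g)) (h6 : cond6 W ρ (fun h g => σb h g))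
    (h7 : cond7 ρ (fun h g => σb h g)) (h8 : cond8 W ρ (fun h g => σb h g))
    (h9 : cond9 W ρ (fun h g => σb h g)) (h10 : cond10 W ρ) :
    cond2 W ρ ∧ cond4 ρ ∧ cond11 ρ ∧
      cond17 W ρ ⇑(TensorProduct.lift σb) ∧ cond18 W ρ ⇑(TensorProduct.lift σb) ∧
      cond19 W ρ ⇑(TensorProduct.lift σb) ∧ cond20 W ρ ⇑(TensorProduct.lift σb) ∧
      cond21 W ρ ⇑(TensorProduct.lift σb) ∧ cond22 W ρ :=
  ⟨h2, h4, cond11_of_cond1_of_cond10 hW h1 h10, cond17_lift_iff_cond8.2 h8,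
    cond18_lift_iff_cond9.2 h9, cond19_lift_of_cond1_of_cond6_of_cond9 hW h1 h6 h9,
    cond20_lift_of_cond1_of_cond6_of_cond7 hW h1 h6 h7,
    cond21_lift_of_cond1_of_cond5_of_cond7 hW h1 h5 h7,
    cond22_of_cond2_of_cond3_of_cond4 hW h2 h3 h4⟩

/-- main theorem, first direction: if `ρ` and the `H^R`-balanced
bilinear map `σ` satisfy conditions (1)–(10), then, with `ς(h⊗k) := σ(h,k)`,
the maps `ρ` and `ς` satisfy conditions (2), (4), (11) and (17)–(22). -/
theorem statement6 {k H A : Type*} [Field k] [Ring H] [Algebra k H] [Ring A] [Algebra k A]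
    (W : WeakHopfData k H) (hW : IsWeakHopf W) (ρ : H →ₗ[k] A →ₗ[k] A)
    (σb : H →ₗ[k] H →ₗ[k] A) (hbal : HRBalanced W (fun h g => σb h g))
    (h1 : cond1 W ρ) (h2 : cond2 W ρ) (h3 : cond3 W ρ) (h4 : cond4 ρ)
    (h5 : cond5 W ρ (fun h g => σb h g)) (h6 : cond6 W ρ (fun h g => σb h g))
    (h7 : cond7 ρ (fun h g => σb h g)) (h8 : cond8 W ρ (fun h g => σb h g))
    (h9 : cond9 W ρ (fun h g => σb h g)) (h10 : cond10 W ρ) :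
    cond2 W ρ ∧ cond4 ρ ∧ cond11 ρ ∧
      cond17 W ρ ⇑(TensorProduct.lift σb) ∧ cond18 W ρ ⇑(TensorProduct.lift σb) ∧
      cond19 W ρ ⇑(TensorProduct.lift σb) ∧ cond20 W ρ ⇑(TensorProduct.lift σb) ∧
      cond21 W ρ ⇑(TensorProduct.lift σb) ∧ cond22 W ρ :=
  statement6_general W hW ρ σb h1 h2 h3 h4 h5 h6 h7 h8 h9 h10
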